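/- Fix k ≥ 1, continuous functions a₁,…,a_k : [τ,∞) → ℝ and ε : [τ,∞) → ℝ, and nonnegative initial values p₁,…,p_k with p₁+⋯+p_k ≤ 1. Define for t ≥ τ: x_i(t) = p_i·e^{-∫_τ^t (a_i(s)-ε(s))ds} / (Σ_{j=1}^k p_j·e^{-∫_τ^t (a_j(s)-ε(s))ds} + 1 - Σ_{j=1}^k p_j). Then each x_i is differentiable and satisfies the coupled ODE system x_i'(t) = (−a_i(t) + ε(t) + Σ_{j=1}^k (a_j(t) − ε(t))·x_j(t))·x_i(t) with x_i(τ) = p_i. -/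

import Mathlib

/-!
With `E i t = exp (-∫_τ^t (a i - ε))` we have `E i' = -(a i - ε) E i`, so the denominator
`∑ p j E j + 1 - ∑ p j` has logarithmic derivative `-∑ (a j - ε) x j`. The quotient rule applied to
`x i = p i E i / denominator` then yields the coupled system.
-/

open intervalIntegral Finset

theorem hasDerivAt_exp_neg_integral {f : ℝ → ℝ} (hf : Continuous f) (τ t : ℝ) :
    HasDerivAt (fun u => Real.exp (-∫ s in τ..u, f s))
      (-f t * Real.exp (-∫ s in τ..t, f s)) t := by
  simpa [mul_comm] using (hf.integral_hasStrictDerivAt τ t).hasDerivAt.neg.exp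

section NormalizedWeight

variable {ι : Type*} [Fintype ι]

noncomputable def normalizedWeight (p : ι → ℝ) (E : ι → ℝ → ℝ) (i : ι) (t : ℝ) : ℝ :=
  p i * E i t / (∑ j, p j * E j t + 1 - ∑ j, p j)

theorem sum_mul_add_one_sub_sum_pos {p : ι → ℝ} {e : ι → ℝ} (hp : ∀ i, 0 ≤ p i)
    (hpsum : ∑ j, p j ≤ 1) (hnd : ∑ j, p j = 1 → ∃ j, 0 < p j) (he : ∀ j, 0 < e j) :
    0 < ∑ j, p j * e j + 1 - ∑ j, p j := by
  have hterm : ∀ j ∈ univ, 0 ≤ p j * e j := fun j _ => mul_nonneg (hp j) (he j).le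
  rcases hpsum.lt_or_eq with hlt | heq
  · linarith [sum_nonneg hterm]
  · obtain ⟨j, hj⟩ := hnd heq
    linarith [single_le_sum hterm (mem_univ j), mul_pos hj (he j)]

theorem normalizedWeight_of_forall_eq_one {p : ι → ℝ} {E : ι → ℝ → ℝ} {t : ℝ}
    (hE : ∀ j, E j t = 1) (i : ι) : normalizedWeight p E i t = p i := by
  simp [normalizedWeight, hE]

theorem hasDerivAt_normalizedWeight {p : ι → ℝ} {E : ι → ℝ → ℝ} {c : ι → ℝ} {t : ℝ}
    (hE : ∀ j, HasDerivAt (E j) (-c j * E j t) t)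
    (hD : ∑ j, p j * E j t + 1 - ∑ j, p j ≠ 0) (i : ι) :
    HasDerivAt (normalizedWeight p E i)
      ((-c i + ∑ j, c j * normalizedWeight p E j t) * normalizedWeight p E i t) t := by
  have hnum : HasDerivAt (fun u => p i * E i u) (p i * (-c i * E i t)) t :=
    (hE i).const_mul (p i)
  have hden : HasDerivAt (fun u => ∑ j, p j * E j u + 1 - ∑ j, p j)
      (∑ j, p j * (-c j * E j t)) t :=
    ((HasDerivAt.fun_sum fun j _ => (hE j).const_mul (p j)).add_const 1).sub_const _
  refine (hnum.div hden hD).congr_deriv ?_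
  set D := ∑ j, p j * E j t + 1 - ∑ j, p j
  have hxi : normalizedWeight p E i t = p i * E i t / D := rfl
  have hsum : ∑ j, c j * normalizedWeight p E j t = (∑ j, c j * (p j * E j t)) / D := by
    rw [sum_div]; exact sum_congr rfl fun j _ => mul_div_assoc' _ _ _
  have hsum' : ∑ j, p j * (-c j * E j t) = -∑ j, c j * (p j * E j t) := by
    rw [← sum_neg_distrib]; exact sum_congr rfl fun j _ => by ring
  rw [hxi, hsum, hsum']
  field_simp
  ring

end NormalizedWeight

theorem filtering_ode_solution_general (k : ℕ) (τ : ℝ)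
    (a : Fin k → ℝ → ℝ) (ε : ℝ → ℝ)
    (ha : ∀ i, Continuous (a i)) (hε : Continuous ε)
    (p : Fin k → ℝ) (hp : ∀ i, 0 ≤ p i) (hpsum : ∑ j, p j ≤ 1)
    (hnd : ∑ j, p j = 1 → ∃ j, 0 < p j)
    (x : Fin k → ℝ → ℝ)
    (hx : ∀ i t, x i t =
      p i * Real.exp (-(∫ s in τ..t, (a i s - ε s))) /
        ((∑ j, p j * Real.exp (-(∫ s in τ..t, (a j s - ε s)))) + 1 - ∑ j, p j)) :
    (∀ i, x i τ = p i) ∧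
      ∀ i t, τ ≤ t →
        HasDerivAt (x i)
          ((-(a i t) + ε t + ∑ j, (a j t - ε t) * x j t) * x i t) t := by
  set E : Fin k → ℝ → ℝ := fun j t => Real.exp (-∫ s in τ..t, (a j s - ε s))
  have hxE : x = normalizedWeight p E := funext fun i => funext (hx i)
  subst hxE
  refine ⟨normalizedWeight_of_forall_eq_one fun j => by simp [E], fun i t _ => ?_⟩
  have hE : ∀ j, HasDerivAt (E j) (-(a j t - ε t) * E j t) t := fun j =>
    hasDerivAt_exp_neg_integral (f := fun s => a j s - ε s) ((ha j).sub hε) τ t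
  have hD := sum_mul_add_one_sub_sum_pos (e := fun j => E j t) hp hpsum hnd
    fun j => Real.exp_pos _
  convert hasDerivAt_normalizedWeight hE hD.ne' i using 2
  ring

/-- The explicit formula (3.2) solves the normalized filtering ODE system (B.1)
between observation times in the mother-quake model. -/
theorem filtering_ode_solution (k : ℕ) (hk : 1 ≤ k) (τ : ℝ)
    (a : Fin k → ℝ → ℝ) (ε : ℝ → ℝ)
    (ha : ∀ i, Continuous (a i)) (hε : Continuous ε)
    (p : Fin k → ℝ) (hp : ∀ i, 0 ≤ p i) (hpsum : ∑ j, p j ≤ 1)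
    (hnd : ∑ j, p j = 1 → ∃ j, 0 < p j)
    (x : Fin k → ℝ → ℝ)
    (hx : ∀ i t, x i t =
      p i * Real.exp (-(∫ s in τ..t, (a i s - ε s))) /
        ((∑ j, p j * Real.exp (-(∫ s in τ..t, (a j s - ε s)))) + 1 - ∑ j, p j)) :
    (∀ i, x i τ = p i) ∧
      ∀ i t, τ ≤ t →
        HasDerivAt (x i)
          ((-(a i t) + ε t + ∑ j, (a j t - ε t) * x j t) * x i t) t :=
  filtering_ode_solution_general k τ a ε ha hε p hp hpsum hnd x hx
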